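/- In the ring R = ℤ[a_α, a_λ, u_{2α}, u_λ]/(2a_α, 4a_λ, a_α²u_λ − 2a_λu_{2α}), we have 2·a_α = 0 and a_α³u_λ = 0, but a_α²u_λ = 2a_λu_{2α} ≠ 0 in R. -/

import Mathlib

open MvPolynomial

/-- The ring `R = ℤ[a_α, a_λ, u_{2α}, u_λ]/(2a_α, 4a_λ, a_α²u_λ − 2a_λu_{2α})`
(variables `0,1,2,3 = a_α, a_λ, u_{2α}, u_λ`). -/
noncomputable abbrev posCone19 : Type :=
  MvPolynomial (Fin 4) ℤ ⧸ (Ideal.span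
    {(2 : MvPolynomial (Fin 4) ℤ) * X 0, 4 * X 1, (X 0) ^ 2 * X 3 - 2 * X 1 * X 2} :
      Ideal (MvPolynomial (Fin 4) ℤ))

set_option maxHeartbeats 2000000

/-- Auxiliary ring `T = ℤ[x]/(4, 2x, x² - 2)`, modeled on `ZMod 4 × ZMod 2`
(the pair `(a, b)` represents `a + b·x`). -/
def T : Type := ZMod 4 × ZMod 2

namespace T
instance : DecidableEq T := inferInstanceAs (DecidableEq (ZMod 4 × ZMod 2))
instance : Fintype T := inferInstanceAs (Fintype (ZMod 4 × ZMod 2))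
instance : Zero T := ⟨((0 : ZMod 4), (0 : ZMod 2))⟩
instance : One T := ⟨((1 : ZMod 4), (0 : ZMod 2))⟩
instance : Add T := ⟨fun a b => (a.1 + b.1, a.2 + b.2)⟩
instance : Neg T := ⟨fun a => (-a.1, -a.2)⟩
instance : Mul T := ⟨fun a b =>
  ((a.1 * b.1 + 2 * ((a.2.val : ZMod 4) * (b.2.val : ZMod 4))),
   ((a.1.val : ZMod 2) * (b.2.val : ZMod 2) + (a.2.val : ZMod 2) * (b.1.val : ZMod 2)))⟩

instance : CommRing T where
  add_assoc := by decide
  zero_add := by decide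
  add_zero := by decide
  add_comm := by decide
  neg_add_cancel := by decide
  left_distrib := by decide
  right_distrib := by decide
  zero_mul := by decide
  mul_zero := by decide
  mul_assoc := by decide
  one_mul := by decide
  mul_one := by decide
  mul_comm := by decide
  nsmul := nsmulRec
  zsmul := zsmulRec

/-- The nilpotent-ish element `x` with `2x = 0`, `x² = 2`. -/
def x : T := ((0 : ZMod 4), (1 : ZMod 2))
end T

/-- In `R = ℤ[a_α, a_λ, u_{2α}, u_λ]/(2a_α, 4a_λ, a_α²u_λ − 2a_λu_{2α})`,
the annihilator of `u_λ` contains `a_α³` but not `a_α²`, and `a_α` is 2-torsion: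
precisely `2·a_α = 0`, `a_α³u_λ = 0`, but `a_α²u_λ = 2a_λu_{2α} ≠ 0` in `R`. -/
theorem stmt_19 (aAlpha aLambda u2Alpha uLambda : posCone19)
    (h0 : aAlpha = Ideal.Quotient.mk _ (X 0))
    (h1 : aLambda = Ideal.Quotient.mk _ (X 1))
    (h2 : u2Alpha = Ideal.Quotient.mk _ (X 2))
    (h3 : uLambda = Ideal.Quotient.mk _ (X 3)) :
    2 * aAlpha = 0 ∧
    aAlpha ^ 3 * uLambda = 0 ∧
    aAlpha ^ 2 * uLambda = 2 * aLambda * u2Alpha ∧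
    2 * aLambda * u2Alpha ≠ 0 := by
  set I : Ideal (MvPolynomial (Fin 4) ℤ) := Ideal.span
    {(2 : MvPolynomial (Fin 4) ℤ) * X 0, 4 * X 1, (X 0) ^ 2 * X 3 - 2 * X 1 * X 2} with hI
  subst h0 h1 h2 h3
  have hg1 : (2 : MvPolynomial (Fin 4) ℤ) * X 0 ∈ I :=
    Ideal.subset_span (by simp)
  have hg3 : ((X 0 : MvPolynomial (Fin 4) ℤ)) ^ 2 * X 3 - 2 * X 1 * X 2 ∈ I :=
    Ideal.subset_span (by simp)
  have key : ∀ p : MvPolynomial (Fin 4) ℤ,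
      (2 : posCone19) * Ideal.Quotient.mk I (X 1) * Ideal.Quotient.mk I (X 2)
        = Ideal.Quotient.mk I (2 * X 1 * X 2) := by
    intro _; rw [map_mul, map_mul, map_ofNat]
  refine ⟨?_, ?_, ?_, ?_⟩
  · rw [show (2 : posCone19) * Ideal.Quotient.mk I (X 0)
        = Ideal.Quotient.mk I (2 * X 0) by rw [map_mul, map_ofNat]]
    exact Ideal.Quotient.eq_zero_iff_mem.mpr hg1
  · rw [← map_pow, ← map_mul]
    refine Ideal.Quotient.eq_zero_iff_mem.mpr ?_
    have : ((X 0 : MvPolynomial (Fin 4) ℤ)) ^ 3 * X 3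
        = X 0 * ((X 0) ^ 2 * X 3 - 2 * X 1 * X 2) + (X 1 * X 2) * (2 * X 0) := by ring
    rw [this]
    exact I.add_mem (I.mul_mem_left _ hg3) (I.mul_mem_left _ hg1)
  · rw [← map_pow, ← map_mul, key 0, Ideal.Quotient.eq]
    exact hg3
  · rw [key 0]
    intro h
    rw [Ideal.Quotient.eq_zero_iff_mem] at h
    -- map to T sending a_α ↦ x, a_λ ↦ 1, u_{2α} ↦ 1, u_λ ↦ 1
    set φ : MvPolynomial (Fin 4) ℤ →+* T :=
      eval₂Hom (Int.castRingHom T) ![T.x, 1, 1, 1] with hφ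
    have hker : I ≤ RingHom.ker φ := by
      rw [hI, Ideal.span_le]
      intro p hp
      simp only [Set.mem_insert_iff, Set.mem_singleton_iff] at hp
      rcases hp with rfl | rfl | rfl <;>
        · simp only [RingHom.mem_ker, SetLike.mem_coe, map_mul, map_sub, map_pow, map_ofNat,
            hφ, eval₂Hom_X']
          decide
    have : φ (2 * X 1 * X 2) = 0 := hker h
    rw [map_mul, map_mul, map_ofNat, hφ, eval₂Hom_X', eval₂Hom_X'] at this
    revert this
    decide
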